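/- Let n_a ≺ n_t and n_b ≺ n_t be two strict ancestors of a node n_t, let w_a > 0 and w_b > 0 be weights, and assume π(m | par m) > 0 for all nodes m on the paths involved. If (Λ(n_t | n_a) − 1)/w_a ≤ (Λ(n_t | n_b) − 1)/w_b and π(n_a)/w_a ≤ π(n_b)/w_b, then for every node n with n_t ⪯ n, (Λ(n | n_a) − 1)/w_a ≤ (Λ(n | n_b) − 1)/w_b. -/
import Mathlib


/-- A rooted tree: a parent map with a root that every node reaches after finitely
many applications of the parent map. -/
structure ParentTree (N : Type*) where
  root : N
  par : N → N
  par_root : par root = root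
  reaches_root : ∀ n : N, ∃ k : ℕ, par^[k] n = root

namespace ParentTree

variable {N : Type*}

/-- `t.anc n m` means `n` is an ancestor of `m` (possibly `n = m`). -/
def anc (t : ParentTree N) (n m : N) : Prop := ∃ k : ℕ, t.par^[k] m = n

/-- `t.sanc n m` means `n` is a strict ancestor of `m`. -/
def sanc (t : ParentTree N) (n m : N) : Prop := t.anc n m ∧ n ≠ m

/-- The set of children of a node. -/
def children (t : ParentTree N) (n : N) : Set N := {m | m ≠ t.root ∧ t.par m = n}

/-- The depth of a node: the least `k` with `par^[k] n = root`. -/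
noncomputable def depth (t : ParentTree N) (n : N) : ℕ := sInf {k : ℕ | t.par^[k] n = t.root}

/-- The distance from an ancestor `n` to `m`: the least `k` with `par^[k] m = n`. -/
noncomputable def dist (t : ParentTree N) (n m : N) : ℕ := sInf {k : ℕ | t.par^[k] m = n}

end ParentTree

/-- A policy: conditional probabilities `π(m | par m)` on nodes, summing to at most 1
over the children of any node. -/
structure Policy {N : Type*} (t : ParentTree N) where
  cond : N → ℝ
  cond_nonneg : ∀ m : N, 0 ≤ cond m
  cond_le_one : ∀ m : N, cond m ≤ 1
  sum_le_one : ∀ (n : N) (s : Finset N), ↑s ⊆ t.children n → ∑ m ∈ s, cond m ≤ 1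

namespace Policy

variable {N : Type*} {t : ParentTree N}

/-- The path probability `π(n)`: the product of the conditional probabilities along the
path from the root to `n` (so `π(root) = 1` and `π(m) = π(m | par m)·π(par m)`). -/
noncomputable def pathProb (P : Policy t) (n : N) : ℝ :=
  ∏ k ∈ Finset.range (t.depth n), P.cond (t.par^[k] n)

end Policy

namespace Policy

variable {N : Type*} {t : ParentTree N}

/-- The relative path probability `π(n | na)`: the product of the conditional
probabilities along the path from `na` (excluded) to `n`. -/
noncomputable def relProb (P : Policy t) (na n : N) : ℝ :=
  ∏ j ∈ Finset.range (t.dist na n), P.cond (t.par^[j] n)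

/-- The rooted slenderness cost `Λ(n | na) = Σ_{na ⪯ n̄ ⪯ n} 1/π(n̄ | na)` (real-valued,
meaningful when `na` is an ancestor of `n`). -/
noncomputable def rootSlendR (P : Policy t) (na n : N) : ℝ :=
  ∑ k ∈ Finset.range (t.dist na n + 1), (P.relProb na (t.par^[k] n))⁻¹

end Policy

namespace ParentTree

variable {N : Type*} (t : ParentTree N)

lemma iterate_root' (k : ℕ) : t.par^[k] t.root = t.root := by
  induction k with
  | zero => rfl
  | succ k ih => rw [Function.iterate_succ_apply', ih, t.par_root]

lemma anc_rfl' (n : N) : t.anc n n := ⟨0, rfl⟩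

lemma anc_trans' {x y n : N} (hxy : t.anc x y) (hyn : t.anc y n) : t.anc x n := by
  obtain ⟨j, hj⟩ := hxy; obtain ⟨k, hk⟩ := hyn
  exact ⟨j + k, by rw [Function.iterate_add_apply, hk, hj]⟩

lemma anc_root' (n : N) : t.anc t.root n := t.reaches_root n

lemma dist_spec' {x n : N} (h : t.anc x n) : t.par^[t.dist x n] n = x :=
  Nat.sInf_mem h

lemma dist_le' {x n : N} {k : ℕ} (h : t.par^[k] n = x) : t.dist x n ≤ k :=
  Nat.sInf_le h

lemma eq_root_of_par_eq' {n : N} (h : t.par n = n) : n = t.root := by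
  obtain ⟨k, hk⟩ := t.reaches_root n
  have hall : ∀ j, t.par^[j] n = n := by
    intro j; induction j with
    | zero => rfl
    | succ j ih => rw [Function.iterate_succ_apply, h, ih]
  rw [← hk, hall]

lemma depth_add' {y n : N} (h : t.anc y n) : t.depth n = t.dist y n + t.depth y := by
  have hy := t.dist_spec' h
  have hD : t.par^[t.depth n] n = t.root := t.dist_spec' (t.anc_root' n)
  apply le_antisymm
  · apply Nat.sInf_le
    show t.par^[t.dist y n + t.depth y] n = t.root
    rw [Nat.add_comm, Function.iterate_add_apply, hy]
    exact t.dist_spec' (t.anc_root' y)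
  · rcases le_or_gt (t.dist y n) (t.depth n) with hle | hlt
    · have hyr : t.par^[t.depth n - t.dist y n] y = t.root := by
        have hc := congrArg (t.par^[t.depth n - t.dist y n]) hy
        rw [← Function.iterate_add_apply, Nat.sub_add_cancel hle] at hc
        rw [← hc]; exact hD
      have h2 : t.depth y ≤ t.depth n - t.dist y n := Nat.sInf_le hyr
      omega
    · exfalso
      have hroot' : t.par^[t.dist y n] n = t.root := by
        have h1 : t.dist y n = (t.dist y n - t.depth n) + t.depth n := by omega
        rw [h1, Function.iterate_add_apply, hD, t.iterate_root']
      have hyr : y = t.root := hy.symm.trans hroot'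
      have : t.dist y n ≤ t.depth n := by
        subst hyr; exact le_of_eq rfl
      omega

lemma dist_add' {x y n : N} (hxy : t.anc x y) (hyn : t.anc y n) :
    t.dist x n = t.dist y n + t.dist x y := by
  have hxn : t.anc x n := t.anc_trans' hxy hyn
  have e1 := t.depth_add' hxn
  have e2 := t.depth_add' hyn
  have e3 := t.depth_add' hxy
  omega

end ParentTree

namespace Policy

variable {N : Type*} {t : ParentTree N}

lemma relProb_mul' (P : Policy t) {x y n : N} (hxy : t.anc x y) (hyn : t.anc y n) :
    P.relProb x n = P.relProb y n * P.relProb x y := by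
  unfold Policy.relProb
  rw [t.dist_add' hxy hyn, Finset.prod_range_add]
  congr 1
  apply Finset.prod_congr rfl
  intro j _
  rw [Nat.add_comm (t.dist y n) j, Function.iterate_add_apply, t.dist_spec' hyn]

end Policy

/-- let `n_a ≺ n_t` and `n_b ≺ n_t`, with weights `w_a, w_b > 0` and
positive conditional probabilities on the paths involved. If
`(Λ(n_t|n_a) − 1)/w_a ≤ (Λ(n_t|n_b) − 1)/w_b` and `π(n_a)/w_a ≤ π(n_b)/w_b`, then for
every node `n ⪰ n_t`, `(Λ(n|n_a) − 1)/w_a ≤ (Λ(n|n_b) − 1)/w_b`. -/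
theorem stmt15 {N : Type*} (t : ParentTree N) (P : Policy t)
    (na nb nt : N) (ha : t.sanc na nt) (hb : t.sanc nb nt)
    (wa wb : ℝ) (hwa : 0 < wa) (hwb : 0 < wb)
    (hpos : ∀ m : N, m ≠ t.root → (t.anc m nt ∨ t.sanc nt m) → 0 < P.cond m)
    (h1 : (P.rootSlendR na nt - 1) / wa ≤ (P.rootSlendR nb nt - 1) / wb)
    (h2 : P.pathProb na / wa ≤ P.pathProb nb / wb) :
    ∀ n : N, t.anc nt n →
      (P.rootSlendR na n - 1) / wa ≤ (P.rootSlendR nb n - 1) / wb := by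
  obtain ⟨hant, hane⟩ := ha
  obtain ⟨hbnt, hbne⟩ := hb
  have hnt_ne_root : nt ≠ t.root := by
    intro h; subst h
    obtain ⟨k, hk⟩ := hant
    rw [t.iterate_root'] at hk
    exact hane hk.symm
  -- positivity of relative probabilities above nt
  have hrelpos : ∀ x y : N, t.anc x y → t.anc y nt → 0 < P.relProb x y := by
    intro x y hxy hynt
    apply Finset.prod_pos
    intro j hj
    rw [Finset.mem_range] at hj
    apply hpos
    · intro hroot
      have hx : x = t.root := by
        have h1 : t.dist x y = (t.dist x y - j) + j := by omega
        have h2 := t.dist_spec' hxy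
        rw [h1, Function.iterate_add_apply, hroot, t.iterate_root'] at h2
        exact h2.symm
      have : t.dist x y ≤ j := t.dist_le' (hroot.trans hx.symm)
      omega
    · exact Or.inl (t.anc_trans' ⟨j, rfl⟩ hynt)
  have hpath : ∀ n : N, P.pathProb n = P.relProb t.root n := fun _ => rfl
  have hpa : 0 < P.pathProb na := by rw [hpath]; exact hrelpos _ _ (t.anc_root' na) hant
  have hpb : 0 < P.pathProb nb := by rw [hpath]; exact hrelpos _ _ (t.anc_root' nb) hbnt
  have hpt : 0 < P.pathProb nt := by
    rw [hpath]; exact hrelpos _ _ (t.anc_root' nt) (t.anc_rfl' nt)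
  have hea : P.pathProb nt = P.relProb na nt * P.pathProb na := by
    rw [hpath nt, hpath na]; exact P.relProb_mul' (t.anc_root' na) hant
  have heb : P.pathProb nt = P.relProb nb nt * P.pathProb nb := by
    rw [hpath nt, hpath nb]; exact P.relProb_mul' (t.anc_root' nb) hbnt
  have hra : 0 < P.relProb na nt := hrelpos _ _ hant (t.anc_rfl' nt)
  have hrb : 0 < P.relProb nb nt := hrelpos _ _ hbnt (t.anc_rfl' nt)
  have hinva : (P.relProb na nt)⁻¹ = P.pathProb na / P.pathProb nt := by
    rw [hea]; field_simp
  have hinvb : (P.relProb nb nt)⁻¹ = P.pathProb nb / P.pathProb nt := by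
    rw [heb]; field_simp
  have hbase : (P.relProb na nt)⁻¹ / wa ≤ (P.relProb nb nt)⁻¹ / wb := by
    rw [hinva, hinvb]
    have hmul := mul_le_mul_of_nonneg_right h2 (inv_nonneg.2 hpt.le)
    have e : ∀ p : ℝ, ∀ w : ℝ, p / P.pathProb nt / w = p / w * (P.pathProb nt)⁻¹ := by
      intros; ring
    rw [e, e]; exact hmul
  have key : ∀ k : ℕ, ∀ n : N, t.par^[k] n = nt →
      ((P.rootSlendR na n - 1) / wa ≤ (P.rootSlendR nb n - 1) / wb ∧
       (P.relProb na n)⁻¹ / wa ≤ (P.relProb nb n)⁻¹ / wb) := by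
    intro k
    induction k with
    | zero =>
      intro n h
      rw [Function.iterate_zero_apply] at h
      subst h; exact ⟨h1, hbase⟩
    | succ k ih =>
      intro n h
      by_cases hn : n = nt
      · subst hn; exact ⟨h1, hbase⟩
      · have hm : t.par^[k] (t.par n) = nt := by
          rw [← Function.iterate_succ_apply]; exact h
        obtain ⟨IH1, IH2⟩ := ih (t.par n) hm
        have hn_root : n ≠ t.root := by
          intro hr; subst hr
          exact hnt_ne_root (by rw [← h, t.iterate_root'])
        have hcond : 0 < P.cond n :=
          hpos n hn_root (Or.inr ⟨⟨k + 1, h⟩, fun he => hn he.symm⟩)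
        have hanc_m_n : t.anc (t.par n) n := ⟨1, rfl⟩
        have hdist1 : t.dist (t.par n) n = 1 := by
          have hle := t.dist_le' (show t.par^[1] n = t.par n from rfl)
          have hne : t.dist (t.par n) n ≠ 0 := by
            intro h0
            have hs := t.dist_spec' hanc_m_n
            rw [h0, Function.iterate_zero_apply] at hs
            exact hn_root (t.eq_root_of_par_eq' hs.symm)
          omega
        have hanc_na_m : t.anc na (t.par n) := t.anc_trans' hant ⟨k, hm⟩
        have hanc_nb_m : t.anc nb (t.par n) := t.anc_trans' hbnt ⟨k, hm⟩
        have hrel_step : ∀ nc : N, t.anc nc (t.par n) →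
            P.relProb nc n = P.cond n * P.relProb nc (t.par n) := by
          intro nc hc
          rw [P.relProb_mul' hc hanc_m_n]
          congr 1
          unfold Policy.relProb
          rw [hdist1, Finset.prod_range_one, Function.iterate_zero_apply]
        have hslend_step : ∀ nc : N, t.anc nc (t.par n) →
            P.rootSlendR nc n = (P.relProb nc n)⁻¹ + P.rootSlendR nc (t.par n) := by
          intro nc hc
          unfold Policy.rootSlendR
          rw [show t.dist nc n = t.dist nc (t.par n) + 1 from by
            rw [t.dist_add' hc hanc_m_n, hdist1]; omega]
          rw [Finset.sum_range_succ', add_comm]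
          congr 1
        have hstep2 : (P.relProb na n)⁻¹ / wa ≤ (P.relProb nb n)⁻¹ / wb := by
          rw [hrel_step na hanc_na_m, hrel_step nb hanc_nb_m, mul_inv, mul_inv,
            mul_div_assoc, mul_div_assoc]
          exact mul_le_mul_of_nonneg_left IH2 (inv_nonneg.2 hcond.le)
        have hstep1 : (P.rootSlendR na n - 1) / wa ≤ (P.rootSlendR nb n - 1) / wb := by
          rw [hslend_step na hanc_na_m, hslend_step nb hanc_nb_m]
          have e : ∀ x y w : ℝ, (x + y - 1) / w = x / w + (y - 1) / w := by
            intros; ring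
          rw [e, e]
          exact add_le_add hstep2 IH1
        exact ⟨hstep1, hstep2⟩
  intro n hn
  obtain ⟨k, hk⟩ := hn
  exact (key k n hk).1
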